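/- For all integers h, j, m with j ≥ |h| and |m| ≤ j, the spin-weighted spherical harmonic of spin weight −h satisfies the total angular momentum eigenvalue equation: for all (θ, φ) ∈ (0, π) × ℝ, J'²_h (_{−h}Y_{jm})(θ,φ) = j(j+1) (_{−h}Y_{jm})(θ,φ), where J'²_h = −[∂²_θ + (cos θ/sin θ)∂_θ + (1/sin²θ)∂²_φ] + (2ih cos θ/sin²θ)∂_φ + h²/sin²θ. -/

import Mathlib

open scoped BigOperators

/-- The spin-weighted spherical harmonic `ₛY_{jm}(θ,φ)` of spin weight `s`, for integers
`s, j, m` (intended for `j ≥ |s|`; defined to be `0` when `|m| > j`), given by the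
explicit Goldberg et al. formula
`ₛY_{jm}(θ,φ) = [ (j+m)! (j−m)! (2j+1) / (4π (j+s)! (j−s)!) ]^{1/2} (sin(θ/2))^{2j}
  Σ_q C(j−s, q) C(j+s, q+s−m) (−1)^{j−q−s} e^{imφ} (cot(θ/2))^{2q+s−m}`,
the sum ranging over `max(0, m−s) ≤ q ≤ min(j−s, j+m)`. -/
noncomputable def swsh (s j m : ℤ) (θ φ : ℝ) : ℂ :=
  if |m| > j then 0 else
    (Real.sqrt ((((j + m).toNat.factorial : ℝ) * ((j - m).toNat.factorial : ℝ) *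
          ((2 * j + 1 : ℤ) : ℝ)) /
        (4 * Real.pi * ((j + s).toNat.factorial : ℝ) * ((j - s).toNat.factorial : ℝ))) : ℂ) *
      ((Real.sin (θ / 2) : ℂ) ^ (2 * j).toNat) *
      ∑ q ∈ Finset.Icc (max 0 (m - s)) (min (j - s) (j + m)),
        (((j - s).toNat.choose q.toNat : ℕ) : ℂ) *
          (((j + s).toNat.choose (q + s - m).toNat : ℕ) : ℂ) *
          (-1 : ℂ) ^ (j - q - s) *
          Complex.exp (Complex.I * (m : ℂ) * (φ : ℂ)) *
          ((Real.cos (θ / 2) / Real.sin (θ / 2) : ℝ) : ℂ) ^ (2 * q + s - m).toNat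


/-!
On `(0, π) × ℝ` the harmonic separates as `c · e^{imφ} · Θ(θ)`, and on such a mode `J'²_h`
reduces to the ordinary differential operator `spinLegendreOp (-h) m`. The polar factor `Θ` is a
combination `Σ_q c_q sin^{2j-b_q}(θ/2) cos^{b_q}(θ/2)` with `b_q = 2q - h - m`. With integer
exponents, that operator sends each monomial `sin^a(θ/2) cos^b(θ/2)` to a three-term combination
of itself and its neighbours `(a ∓ 2, b ± 2)`. The binomial recurrence satisfied by `c_q` makes the
off-diagonal contributions of consecutive `q` cancel, the boundary ones vanish, and the diagonal
coefficient is `j(j+1)` for every `q`.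
-/

open Real Finset Filter Topology

theorem ContDiffOn.zpow {E : Type*} [NormedAddCommGroup E] [NormedSpace ℝ E] {f : E → ℝ}
    {s : Set E} {n : WithTop ℕ∞} (hf : ContDiffOn ℝ n f s) (h : ∀ x ∈ s, f x ≠ 0) (k : ℤ) :
    ContDiffOn ℝ n (fun x => f x ^ k) s := by
  obtain ⟨k, rfl | rfl⟩ := Int.eq_nat_or_neg k
  · simpa using hf.pow k
  · simp only [zpow_neg, zpow_natCast]
    exact (hf.pow k).inv fun x hx => pow_ne_zero k (h x hx)

theorem Finset.sum_Icc_eq_sum_Icc_of_shift {M : Type*} [AddCommMonoid M] {L H : ℤ}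
    {u v : ℤ → M} (hH : u H = 0) (hL : v L = 0) (h : ∀ q, L ≤ q → q < H → u q = v (q + 1)) :
    ∑ q ∈ Icc L H, u q = ∑ q ∈ Icc L H, v q := by
  rcases lt_or_ge H L with hLH | hLH
  · simp [Icc_eq_empty_of_lt hLH]
  have hIoc : Ioc L H = (Ico L H).map (addRightEmbedding 1) := by
    ext q
    simp only [mem_Ioc, mem_map, mem_Ico, addRightEmbedding_apply]
    exact ⟨fun hq => ⟨q - 1, by omega, by omega⟩, by rintro ⟨p, hp, rfl⟩; omega⟩
  rw [← Ico_insert_right hLH, sum_insert right_notMem_Ico, hH, zero_add, Ico_insert_right hLH,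
    ← Ioc_insert_left hLH, sum_insert left_notMem_Ioc, hL, zero_add, hIoc, sum_map]
  exact sum_congr rfl fun q hq => h q (mem_Ico.1 hq).1 (mem_Ico.1 hq).2

lemma sin_half_pos_of_mem_Ioo {t : ℝ} (ht : t ∈ Set.Ioo 0 π) : 0 < sin (t / 2) :=
  sin_pos_of_pos_of_lt_pi (by linarith [ht.1]) (by linarith [ht.2, pi_pos])

lemma cos_half_pos_of_mem_Ioo {t : ℝ} (ht : t ∈ Set.Ioo 0 π) : 0 < cos (t / 2) :=
  cos_pos_of_mem_Ioo ⟨by linarith [ht.1, pi_pos], by linarith [ht.2]⟩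

noncomputable def halfAngleMonomial (a b : ℤ) (t : ℝ) : ℝ := sin (t / 2) ^ a * cos (t / 2) ^ b

lemma contDiffOn_halfAngleMonomial (a b : ℤ) (n : WithTop ℕ∞) :
    ContDiffOn ℝ n (halfAngleMonomial a b) (Set.Ioo 0 π) := by
  have hdiv : ContDiff ℝ n fun t : ℝ => t / 2 := contDiff_id.div_const 2
  exact ((contDiff_sin.comp hdiv).contDiffOn.zpow
      (fun t ht => (sin_half_pos_of_mem_Ioo ht).ne') a).mul
    ((contDiff_cos.comp hdiv).contDiffOn.zpow (fun t ht => (cos_half_pos_of_mem_Ioo ht).ne') b)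

lemma hasDerivAt_halfAngleMonomial (a b : ℤ) {t : ℝ} (ht : t ∈ Set.Ioo 0 π) :
    HasDerivAt (halfAngleMonomial a b)
      ((a * halfAngleMonomial (a - 1) (b + 1) t - b * halfAngleMonomial (a + 1) (b - 1) t) / 2)
      t := by
  have hS := (sin_half_pos_of_mem_Ioo ht).ne'
  have hC := (cos_half_pos_of_mem_Ioo ht).ne'
  have hdiv : HasDerivAt (fun t : ℝ => t / 2) (1 / 2) t := (hasDerivAt_id t).div_const 2
  have hsin := (hasDerivAt_zpow a _ (Or.inl hS)).comp t ((hasDerivAt_sin _).comp t hdiv)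
  have hcos := (hasDerivAt_zpow b _ (Or.inl hC)).comp t ((hasDerivAt_cos _).comp t hdiv)
  refine (hsin.mul hcos).congr_deriv ?_
  simp only [halfAngleMonomial, Function.comp_apply, zpow_sub_one₀ hS, zpow_add_one₀ hS,
    zpow_sub_one₀ hC, zpow_add_one₀ hC]
  field_simp
  ring

/-- The polar part of `J'²_h` on a mode `e^{imφ}` of spin weight `s = -h`. -/
noncomputable def spinLegendreOp (s m : ℝ) (f : ℝ → ℝ) (t : ℝ) : ℝ :=
  -deriv (deriv f) t - cos t / sin t * deriv f t
    + (m ^ 2 + s ^ 2 + 2 * m * s * cos t) / sin t ^ 2 * f t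

lemma spinLegendreOp_sum {ι : Type*} (s m : ℝ) {U : Set ℝ} (hU : IsOpen U) {t : ℝ} (ht : t ∈ U)
    (S : Finset ι) (c : ι → ℝ) (f : ι → ℝ → ℝ) (hf : ∀ i ∈ S, ContDiffOn ℝ 2 (f i) U) :
    spinLegendreOp s m (fun y => ∑ i ∈ S, c i * f i y) t
      = ∑ i ∈ S, c i * spinLegendreOp s m (f i) t := by
  have hdiff : ∀ i ∈ S, ∀ y ∈ U, DifferentiableAt ℝ (f i) y := fun i hi y hy =>
    ((hf i hi).differentiableOn two_ne_zero y hy).differentiableAt (hU.mem_nhds hy)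
  have hdiff' : ∀ i ∈ S, DifferentiableAt ℝ (deriv (f i)) t := fun i hi =>
    (((hf i hi).deriv_of_isOpen hU (by norm_num : (1 : WithTop ℕ∞) + 1 ≤ 2)).differentiableOn
      one_ne_zero t ht).differentiableAt (hU.mem_nhds ht)
  have hd : ∀ y ∈ U,
      deriv (fun y => ∑ i ∈ S, c i * f i y) y = ∑ i ∈ S, c i * deriv (f i) y := by
    intro y hy
    rw [deriv_fun_sum fun i hi => (hdiff i hi y hy).const_mul (c i)]
    exact sum_congr rfl fun i hi => deriv_const_mul _ (hdiff i hi y hy)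
  have hdd : deriv (deriv fun y => ∑ i ∈ S, c i * f i y) t
      = ∑ i ∈ S, c i * deriv (deriv (f i)) t := by
    rw [(eventuallyEq_of_mem (hU.mem_nhds ht) hd).deriv_eq,
      deriv_fun_sum fun i hi => (hdiff' i hi).const_mul (c i)]
    exact sum_congr rfl fun i hi => deriv_const_mul _ (hdiff' i hi)
  simp only [spinLegendreOp, hd t ht, hdd, mul_sum, ← sum_neg_distrib, ← sum_sub_distrib,
    ← sum_add_distrib]
  exact sum_congr rfl fun i _ => by ring

lemma spinLegendreOp_halfAngleMonomial (s m : ℝ) (a b : ℤ) {t : ℝ} (ht : t ∈ Set.Ioo 0 π) :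
    spinLegendreOp s m (halfAngleMonomial a b) t =
      ((m + s) ^ 2 - a ^ 2) / 4 * halfAngleMonomial (a - 2) (b + 2) t
        + (2 * a * b + 2 * a + 2 * b + (m + s) ^ 2 + (m - s) ^ 2) / 4 * halfAngleMonomial a b t
        + ((m - s) ^ 2 - b ^ 2) / 4 * halfAngleMonomial (a + 2) (b - 2) t := by
  have hS := (sin_half_pos_of_mem_Ioo ht).ne'
  have hC := (cos_half_pos_of_mem_Ioo ht).ne'
  have hderiv : deriv (halfAngleMonomial a b) =ᶠ[𝓝 t] fun y =>
      (a * halfAngleMonomial (a - 1) (b + 1) y - b * halfAngleMonomial (a + 1) (b - 1) y) / 2 :=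
    eventually_of_mem (isOpen_Ioo.mem_nhds ht) fun y hy =>
      (hasDerivAt_halfAngleMonomial a b hy).deriv
  have hderiv₂ : HasDerivAt (fun y =>
      (a * halfAngleMonomial (a - 1) (b + 1) y - b * halfAngleMonomial (a + 1) (b - 1) y) / 2)
      _ t := (((hasDerivAt_halfAngleMonomial (a - 1) (b + 1) ht).const_mul (a : ℝ)).sub
    ((hasDerivAt_halfAngleMonomial (a + 1) (b - 1) ht).const_mul (b : ℝ))).div_const 2
  have hsin : sin t = 2 * sin (t / 2) * cos (t / 2) := by rw [← sin_two_mul]; ring_nf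
  have hcos : cos t = cos (t / 2) ^ 2 - sin (t / 2) ^ 2 := by rw [← cos_two_mul']; ring_nf
  rw [spinLegendreOp, hderiv.deriv_eq, hderiv₂.deriv, hderiv.eq_of_nhds, hsin, hcos]
  simp only [halfAngleMonomial, zpow_sub₀ hS, zpow_add₀ hS, zpow_sub₀ hC, zpow_add₀ hC, zpow_one,
    zpow_two]
  field_simp
  push_cast
  linear_combination -(4 * (m ^ 2 + s ^ 2) * (sin (t / 2) ^ 2 + cos (t / 2) ^ 2 + 1)
    + 8 * m * s * (cos (t / 2) ^ 2 - sin (t / 2) ^ 2)) * sin_sq_add_cos_sq (t / 2)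

noncomputable def swshCoeff (s j m q : ℤ) : ℝ :=
  ((j - s).toNat.choose q.toNat : ℝ) * ((j + s).toNat.choose (q + s - m).toNat : ℝ) *
    (-1) ^ (j - q - s)

lemma swshCoeff_succ_mul {s j m q : ℤ} (hq : 0 ≤ q) (hqs : m - s ≤ q) (hqj : q < j - s)
    (hqm : q < j + m) :
    swshCoeff s j m (q + 1) * ((q + 1) * (q + 1 + s - m))
      = -(swshCoeff s j m q * ((j - q - s) * (j - q + m))) := by
  obtain ⟨k, rfl⟩ : ∃ k : ℕ, q = k := ⟨q.toNat, by omega⟩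
  obtain ⟨r, hr⟩ : ∃ r : ℕ, (k : ℤ) + s - m = r := ⟨(k + s - m).toNat, by omega⟩
  obtain ⟨n₁, hn₁⟩ : ∃ n : ℕ, j - s = n := ⟨(j - s).toNat, by omega⟩
  obtain ⟨n₂, hn₂⟩ : ∃ n : ℕ, j + s = n := ⟨(j + s).toNat, by omega⟩
  have e₁ : (n₁.choose (k + 1) * (k + 1) : ℝ) = n₁.choose k * ((n₁ - k : ℕ) : ℝ) := by
    exact_mod_cast Nat.choose_succ_right_eq n₁ k
  have e₂ : (n₂.choose (r + 1) * (r + 1) : ℝ) = n₂.choose r * ((n₂ - r : ℕ) : ℝ) := by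
    exact_mod_cast Nat.choose_succ_right_eq n₂ r
  have hsub₁ : ((n₁ - k : ℕ) : ℝ) = j - k - s := by
    rw [Nat.cast_sub (by omega)]; exact_mod_cast (by omega : (n₁ : ℤ) - k = j - k - s)
  have hsub₂ : ((n₂ - r : ℕ) : ℝ) = j - k + m := by
    rw [Nat.cast_sub (by omega)]; exact_mod_cast (by omega : (n₂ : ℤ) - r = j - k + m)
  have hr₁ : (k : ℝ) + 1 + s - m = r + 1 := by
    exact_mod_cast (by omega : (k : ℤ) + 1 + s - m = r + 1)
  have hsign : (-1 : ℝ) ^ (j - (k + 1) - s) = -(-1) ^ (j - k - s) := by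
    rw [show j - (k + 1) - s = j - k - s - 1 by ring, zpow_sub_one₀ (by norm_num)]; ring
  simp only [swshCoeff, hn₁, hn₂, Int.toNat_natCast, show ((k : ℤ) + 1).toNat = k + 1 by omega,
    show ((k : ℤ) + s - m).toNat = r by omega, show ((k : ℤ) + 1 + s - m).toNat = r + 1 by omega]
  rw [hsign]
  push_cast
  rw [hr₁, ← hsub₁, ← hsub₂]
  linear_combination -(-1) ^ (j - k - s) *
    ((n₂.choose (r + 1) * (r + 1) : ℝ) * e₁ + n₁.choose k * (n₁ - k : ℕ) * e₂)

noncomputable def swshMonomial (s j m q : ℤ) : ℝ → ℝ :=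
  halfAngleMonomial (2 * j - (2 * q + s - m)) (2 * q + s - m)

noncomputable def swshPolar (s j m : ℤ) (t : ℝ) : ℝ :=
  ∑ q ∈ Icc (max 0 (m - s)) (min (j - s) (j + m)), swshCoeff s j m q * swshMonomial s j m q t

lemma spinLegendreOp_swshMonomial (s j m q : ℤ) {t : ℝ} (ht : t ∈ Set.Ioo 0 π) :
    spinLegendreOp s m (swshMonomial s j m q) t
      = j * (j + 1) * swshMonomial s j m q t
        - (j - q - s) * (j - q + m) * (swshMonomial s j m (q + 1) t + swshMonomial s j m q t)
        - q * (q + s - m) * (swshMonomial s j m q t + swshMonomial s j m (q - 1) t) := by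
  have hraise : swshMonomial s j m (q + 1)
      = halfAngleMonomial (2 * j - (2 * q + s - m) - 2) (2 * q + s - m + 2) := by
    rw [swshMonomial]; congr 1 <;> ring
  have hlower : swshMonomial s j m (q - 1)
      = halfAngleMonomial (2 * j - (2 * q + s - m) + 2) (2 * q + s - m - 2) := by
    rw [swshMonomial]; congr 1 <;> ring
  rw [hraise, hlower, swshMonomial, spinLegendreOp_halfAngleMonomial _ _ _ _ ht]
  push_cast
  ring

lemma contDiffOn_swshPolar (s j m : ℤ) (n : WithTop ℕ∞) :
    ContDiffOn ℝ n (swshPolar s j m) (Set.Ioo 0 π) :=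
  ContDiffOn.sum fun q _ => (contDiffOn_halfAngleMonomial _ _ n).const_smul (swshCoeff s j m q)

lemma spinLegendreOp_swshPolar (s j m : ℤ) {t : ℝ} (ht : t ∈ Set.Ioo 0 π) :
    spinLegendreOp s m (swshPolar s j m) t = j * (j + 1) * swshPolar s j m t := by
  set M := fun q => swshMonomial s j m q t
  set c := swshCoeff s j m
  -- The raising term of `q` cancels the lowering term of `q + 1`; both vanish at the ends.
  have hshift : ∑ q ∈ Icc (max 0 (m - s)) (min (j - s) (j + m)),
        c q * ((j - q - s) * (j - q + m)) * (M (q + 1) + M q)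
      = ∑ q ∈ Icc (max 0 (m - s)) (min (j - s) (j + m)),
        -(c q * (q * (q + s - m)) * (M q + M (q - 1))) := by
    refine sum_Icc_eq_sum_Icc_of_shift ?_ ?_ fun q hLq hqH => ?_
    · rcases min_choice (j - s) (j + m) with h | h <;> rw [h] <;> push_cast <;> ring
    · rcases max_choice 0 (m - s) with h | h <;> rw [h] <;> push_cast <;> ring
    · have hc := swshCoeff_succ_mul (le_of_max_le_left hLq) (le_of_max_le_right hLq)
        (lt_min_iff.1 hqH).1 (lt_min_iff.1 hqH).2
      push_cast at hc ⊢
      rw [add_sub_cancel_right]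
      linear_combination (M (q + 1) + M q) * hc
  calc spinLegendreOp s m (swshPolar s j m) t
      = ∑ q ∈ Icc (max 0 (m - s)) (min (j - s) (j + m)),
          c q * spinLegendreOp s m (swshMonomial s j m q) t :=
        spinLegendreOp_sum _ _ isOpen_Ioo ht _ _ _ fun q _ => contDiffOn_halfAngleMonomial _ _ 2
    _ = ∑ q ∈ Icc (max 0 (m - s)) (min (j - s) (j + m)),
          (j * (j + 1) * (c q * M q) - c q * ((j - q - s) * (j - q + m)) * (M (q + 1) + M q)
            + -(c q * (q * (q + s - m)) * (M q + M (q - 1)))) :=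
        sum_congr rfl fun q _ => by rw [spinLegendreOp_swshMonomial _ _ _ _ ht]; ring
    _ = j * (j + 1) * swshPolar s j m t := by
        rw [sum_add_distrib, sum_sub_distrib, hshift, sub_add_cancel, ← mul_sum]
        rfl

lemma swsh_eq_mul_swshPolar (s j m : ℤ) (hm : |m| ≤ j) :
    ∃ c : ℂ, ∀ t ∈ Set.Ioo 0 π, ∀ φ : ℝ,
      swsh s j m t φ = c * Complex.exp (Complex.I * m * φ) * swshPolar s j m t := by
  refine ⟨Real.sqrt ((((j + m).toNat.factorial : ℝ) * ((j - m).toNat.factorial : ℝ) *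
      ((2 * j + 1 : ℤ) : ℝ)) /
    (4 * Real.pi * ((j + s).toNat.factorial : ℝ) * ((j - s).toNat.factorial : ℝ))),
    fun t ht φ => ?_⟩
  have hS := (sin_half_pos_of_mem_Ioo ht).ne'
  rw [swsh, if_neg (not_lt.2 hm), swshPolar, Complex.ofReal_sum, mul_sum, mul_sum]
  refine sum_congr rfl fun q hq => ?_
  have hb : 0 ≤ 2 * q + s - m := by have := (mem_Icc.1 hq).1; omega
  have hmono :
      sin (t / 2) ^ (2 * j).toNat * (cos (t / 2) / sin (t / 2)) ^ (2 * q + s - m).toNat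
        = swshMonomial s j m q t := by
    rw [swshMonomial, halfAngleMonomial, zpow_sub₀ hS, ← zpow_natCast, ← zpow_natCast, div_zpow,
      Int.toNat_of_nonneg (by have := abs_nonneg m; omega), Int.toNat_of_nonneg hb]
    field_simp
  rw [← hmono, swshCoeff]
  push_cast
  ring

lemma deriv_deriv_of_eqOn_const_mul_ofReal {U : Set ℝ} (hU : IsOpen U) {F : ℝ → ℂ}
    {f : ℝ → ℝ} {K : ℂ} (hF : Set.EqOn F (fun y => K * f y) U) (hf : ContDiffOn ℝ 2 f U)
    {t : ℝ} (ht : t ∈ U) :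
    deriv F t = K * deriv f t ∧ deriv (deriv F) t = K * deriv (deriv f) t := by
  have hderiv : ∀ (g : ℝ → ℝ) (G : ℝ → ℂ) (y : ℝ), G =ᶠ[𝓝 y] (fun y => K * g y) →
      DifferentiableAt ℝ g y → deriv G y = K * deriv g y := fun g G y hG hg =>
    hG.deriv_eq.trans (hg.hasDerivAt.ofReal_comp.const_mul K).deriv
  have hF' : Set.EqOn (deriv F) (fun y => K * deriv f y) U := fun y hy =>
    hderiv f F y (eventuallyEq_of_mem (hU.mem_nhds hy) hF)
      ((hf.differentiableOn two_ne_zero y hy).differentiableAt (hU.mem_nhds hy))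
  refine ⟨hF' ht, hderiv (deriv f) (deriv F) t (eventuallyEq_of_mem (hU.mem_nhds ht) hF') ?_⟩
  exact ((hf.deriv_of_isOpen hU (by norm_num : (1 : WithTop ℕ∞) + 1 ≤ 2)).differentiableOn
    one_ne_zero t ht).differentiableAt (hU.mem_nhds ht)

lemma deriv_const_mul_cexp_mul (K w : ℂ) :
    deriv (fun p : ℝ => K * Complex.exp (w * p)) = fun p : ℝ => w * K * Complex.exp (w * p) := by
  funext p
  have h := (((hasDerivAt_id p).ofReal_comp.const_mul w).cexp).const_mul K
  simp only [id, Complex.ofReal_one, mul_one] at h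
  rw [h.deriv]
  ring

theorem swsh_total_angular_momentum_squared_eigenfunction_general
    (h j m : ℤ) (hm : |m| ≤ j)
    (θ : ℝ) (hθ : θ ∈ Set.Ioo 0 Real.pi) (φ : ℝ) :
    -(deriv (deriv (fun t => swsh (-h) j m t φ)) θ
        + ((Real.cos θ / Real.sin θ : ℝ) : ℂ) * deriv (fun t => swsh (-h) j m t φ) θ
        + ((1 / Real.sin θ ^ 2 : ℝ) : ℂ) * deriv (deriv (fun p => swsh (-h) j m θ p)) φ)
      + 2 * Complex.I * (h : ℂ) * ((Real.cos θ / Real.sin θ ^ 2 : ℝ) : ℂ) *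
          deriv (fun p => swsh (-h) j m θ p) φ
      + ((h : ℂ) ^ 2 / ((Real.sin θ ^ 2 : ℝ) : ℂ)) * swsh (-h) j m θ φ
    = ((j : ℂ) * ((j : ℂ) + 1)) * swsh (-h) j m θ φ := by
  obtain ⟨c, hc⟩ := swsh_eq_mul_swshPolar (-h) j m hm
  set e := Complex.exp (Complex.I * m * φ)
  obtain ⟨hθ₁, hθ₂⟩ := deriv_deriv_of_eqOn_const_mul_ofReal (F := fun t => swsh (-h) j m t φ)
    (K := c * e) isOpen_Ioo (fun t ht => hc t ht φ) (contDiffOn_swshPolar _ _ _ 2) hθ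
  have hφ : (fun p => swsh (-h) j m θ p)
      = fun p : ℝ => c * swshPolar (-h) j m θ * Complex.exp (Complex.I * m * p) := by
    funext p
    rw [hc θ hθ p]
    ring
  have hpolar := congrArg (fun x : ℝ => (x : ℂ)) (spinLegendreOp_swshPolar (-h) j m hθ)
  simp only [spinLegendreOp] at hpolar
  rw [hθ₁, hθ₂, hφ, deriv_const_mul_cexp_mul, deriv_const_mul_cexp_mul, hc θ hθ φ]
  push_cast at hpolar ⊢
  linear_combination c * e * hpolar + (c * swshPolar (-h) j m θ * e *
    (2 * h * m * Complex.cos θ - m ^ 2) / Complex.sin θ ^ 2) * Complex.I_sq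

/-- The spin-weighted spherical harmonics of spin weight `−h` are eigenfunctions of the
squared total angular momentum of helicity-`h` plasma waves with eigenvalue `j(j+1)`:
`J'²_h (_{−h}Y_{jm}) = j(j+1) (_{−h}Y_{jm})` on `(0,π) × ℝ`, where
`J'²_h = −[∂²_θ + (cosθ/sinθ)∂_θ + (1/sin²θ)∂²_φ] + (2ih cosθ/sin²θ)∂_φ + h²/sin²θ`. -/
theorem swsh_total_angular_momentum_squared_eigenfunction
    (h j m : ℤ) (hj : |h| ≤ j) (hm : |m| ≤ j)
    (θ : ℝ) (hθ : θ ∈ Set.Ioo 0 Real.pi) (φ : ℝ) :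
    -(deriv (deriv (fun t => swsh (-h) j m t φ)) θ
        + ((Real.cos θ / Real.sin θ : ℝ) : ℂ) * deriv (fun t => swsh (-h) j m t φ) θ
        + ((1 / Real.sin θ ^ 2 : ℝ) : ℂ) * deriv (deriv (fun p => swsh (-h) j m θ p)) φ)
      + 2 * Complex.I * (h : ℂ) * ((Real.cos θ / Real.sin θ ^ 2 : ℝ) : ℂ) *
          deriv (fun p => swsh (-h) j m θ p) φ
      + ((h : ℂ) ^ 2 / ((Real.sin θ ^ 2 : ℝ) : ℂ)) * swsh (-h) j m θ φ
    = ((j : ℂ) * ((j : ℂ) + 1)) * swsh (-h) j m θ φ :=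
  swsh_total_angular_momentum_squared_eigenfunction_general h j m hm θ hθ φ
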